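/- Let L*, Δ ∈ ℝ^{n×n} and let k ∈ {1,…,n}. Then there exists a decomposition Δ = Δ_A + Δ_B such that (i) rank(Δ_A) ≤ 2k and Δ_Aᵀ Δ_B = Δ_Bᵀ Δ_A = 0, and (ii) ‖L* + Δ‖_* ≥ ‖L*‖_* + ‖Δ_B‖_* − ‖Δ_A‖_* − 2·Σ_{j=k+1}^{n} σ_j(L*). -/

import Mathlib

open Matrix BigOperators Finset

noncomputable section

namespace CitNet

variable {n : ℕ}

/-- Frobenius norm of a real matrix. -/
def frob (A : Matrix (Fin n) (Fin n) ℝ) : ℝ :=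
  Real.sqrt (∑ i, ∑ j, (A i j) ^ 2)

/-- Elementwise ℓ1 norm. -/
def l1 (A : Matrix (Fin n) (Fin n) ℝ) : ℝ :=
  ∑ i, ∑ j, |A i j|

/-- Elementwise sup norm. -/
def supNorm (A : Matrix (Fin n) (Fin n) ℝ) : ℝ :=
  ⨆ i, ⨆ j, |A i j|

/-- Trace inner product. -/
def tinner (A B : Matrix (Fin n) (Fin n) ℝ) : ℝ :=
  Matrix.trace (Aᵀ * B)

/-- Nuclear norm: trace of the PSD square root of AᴴA. -/
def nuclearNorm (A : Matrix (Fin n) (Fin n) ℝ) : ℝ :=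
  (((Matrix.posSemidef_conjTranspose_mul_self A).1.eigenvectorUnitary : Matrix (Fin n) (Fin n) ℝ) *
    diagonal (Real.sqrt ∘ (Matrix.posSemidef_conjTranspose_mul_self A).1.eigenvalues) *
    (star (Matrix.posSemidef_conjTranspose_mul_self A).1.eigenvectorUnitary :
      Matrix (Fin n) (Fin n) ℝ)).trace

/-- Singular values in decreasing order: `svDesc A j` is σ_{j+1}(A). -/
def svDesc (A : Matrix (Fin n) (Fin n) ℝ) : Fin n → ℝ := fun j =>
  Real.sqrt ((Matrix.isHermitian_iff_isSymm.mpr (Matrix.isSymm_transpose_mul_self A)).eigenvalues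
    (Tuple.sort (Matrix.isHermitian_iff_isSymm.mpr (Matrix.isSymm_transpose_mul_self A)).eigenvalues j.rev))

/-- Operator norm: largest singular value. -/
def opNorm (A : Matrix (Fin n) (Fin n) ℝ) : ℝ :=
  ⨆ j, svDesc A j

/-- The all-ones matrix 𝟙𝟙ᵀ. -/
def onesMat : Matrix (Fin n) (Fin n) ℝ :=
  Matrix.of fun _ _ => (1 : ℝ)

/-- The centering matrix J = I − (1/n)𝟙𝟙ᵀ. -/
def Jmat (n : ℕ) : Matrix (Fin n) (Fin n) ℝ :=
  1 - (n : ℝ)⁻¹ • onesMat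

/-- Restriction of a matrix to an index set. -/
def restrict (A : Matrix (Fin n) (Fin n) ℝ) (Ω : Finset (Fin n × Fin n)) :
    Matrix (Fin n) (Fin n) ℝ :=
  Matrix.of fun i j => if (i, j) ∈ Ω then A i j else 0

/-- The logistic (sigmoid) matrix P(Θ). -/
def logis (Θ : Matrix (Fin n) (Fin n) ℝ) : Matrix (Fin n) (Fin n) ℝ :=
  Matrix.of fun i j => Real.exp (Θ i j) / (1 + Real.exp (Θ i j))

/-- Negative log-likelihood function h. -/
def hfun (X Θ : Matrix (Fin n) (Fin n) ℝ) : ℝ :=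
  -(1 / (n : ℝ)) * ∑ i, ∑ j, (X i j * Θ i j - Real.log (1 + Real.exp (Θ i j)))

/-!
The nuclear norm is dual to the operator norm: `tr (Bᴴ M) ≤ ‖M‖_*` whenever `Bᴴ B ≤ 1`, with
equality at the polar factor `W` of `M = W |M|`. Testing against sums of polar factors gives
the triangle inequality and `‖X + Y‖_* = ‖X‖_* + ‖Y‖_*` when `Xᴴ Y = 0` and `X Yᴴ = 0`.

Truncating the singular value decomposition of `L*` after `k` terms writes `L* = Lₖ + Lᵣ` with
`rank Lₖ ≤ k` and `‖Lᵣ‖_* ≤ ∑_{j>k} σ_j(L*)`. For a projection `P` of rank `≤ 2k` with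
`Lₖᴴ (1 - P) = 0` and `(1 - P) Δ Lₖᴴ = 0`, put `Δ_A = P Δ` and `Δ_B = (1 - P) Δ`. Then `Lₖ` and
`Δ_B` are orthogonal on both sides, and
`‖L* + Δ‖_* ≥ ‖Lₖ + Δ_B‖_* - ‖Lᵣ + Δ_A‖_* ≥ ‖Lₖ‖_* + ‖Δ_B‖_* - ‖Lᵣ‖_* - ‖Δ_A‖_*`,
while `‖Lₖ‖_* ≥ ‖L*‖_* - ‖Lᵣ‖_*`.
-/

open scoped MatrixOrder

lemma rank_add_le {l m K : Type*} [Fintype m] [Field K] (A B : Matrix l m K) :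
    (A + B).rank ≤ A.rank + B.rank := by
  refine (Submodule.finrank_mono ?_).trans (Submodule.finrank_add_le_finrank_add_finrank _ _)
  rintro _ ⟨v, rfl⟩
  rw [Matrix.mulVecLin_add]
  exact Submodule.add_mem_sup (LinearMap.mem_range_self _ v) (LinearMap.mem_range_self _ v)

lemma conjTranspose_mul_self_apply_self {l m : Type*} [Fintype l] (F : Matrix l m ℝ) (i : m) :
    (Fᴴ * F) i i = ∑ j, F j i ^ 2 := by
  simp [Matrix.mul_apply, sq]

lemma trace_conjTranspose_mul_le {l m : Type*} [Fintype l] [Fintype m] (F G : Matrix l m ℝ) :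
    (Fᴴ * G).trace ≤ ∑ i, √((Fᴴ * F) i i) * √((Gᴴ * G) i i) := by
  simp only [Matrix.trace, Matrix.diag, conjTranspose_mul_self_apply_self]
  refine Finset.sum_le_sum fun i _ => ?_
  simpa [Matrix.mul_apply] using Real.sum_mul_le_sqrt_mul_sqrt Finset.univ (F · i) (G · i)

lemma trace_le_sum_sqrt_of_conjTranspose_mul_self_eq {m : Type*} [Fintype m] [DecidableEq m]
    {B M V : Matrix m m ℝ} {μ : m → ℝ}
    (hV : Vᴴ * V = 1) (hB : Bᴴ * B ≤ 1) (hM : Mᴴ * M = V * diagonal μ * Vᴴ) :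
    (Bᴴ * M).trace ≤ ∑ i, √(μ i) := by
  have hV' : V * Vᴴ = 1 := mul_eq_one_comm.mp hV
  have hMV : (M * V)ᴴ * (M * V) = diagonal μ := by
    rw [conjTranspose_mul, Matrix.mul_assoc, ← Matrix.mul_assoc Mᴴ, hM]
    simp only [← Matrix.mul_assoc, hV, Matrix.one_mul]
    rw [Matrix.mul_assoc, hV, Matrix.mul_one]
  have hBV : (B * V)ᴴ * (B * V) ≤ 1 := by
    have := (Matrix.le_iff.mp hB).conjTranspose_mul_mul_same V
    rw [Matrix.le_iff]
    convert this using 1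
    rw [Matrix.mul_sub, Matrix.sub_mul, Matrix.mul_one, hV, conjTranspose_mul]
    simp only [Matrix.mul_assoc]
  calc (Bᴴ * M).trace = ((B * V)ᴴ * (M * V)).trace := by
        rw [conjTranspose_mul, Matrix.mul_assoc, Matrix.trace_mul_comm Vᴴ, Matrix.mul_assoc,
          Matrix.mul_assoc, hV', Matrix.mul_one]
    _ ≤ ∑ i, √(((B * V)ᴴ * (B * V)) i i) * √(((M * V)ᴴ * (M * V)) i i) :=
        trace_conjTranspose_mul_le _ _
    _ ≤ ∑ i, 1 * √(μ i) := by
        refine Finset.sum_le_sum fun i _ => ?_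
        rw [hMV, diagonal_apply_eq]
        gcongr
        rw [Real.sqrt_le_one]
        have := (Matrix.le_iff.mp hBV).diag_nonneg (i := i)
        simpa using this
    _ = ∑ i, √(μ i) := by simp

section Gram

variable (A : Matrix (Fin n) (Fin n) ℝ)

def gramVecs : Matrix (Fin n) (Fin n) ℝ :=
  (isHermitian_conjTranspose_mul_self A).eigenvectorUnitary

def gramVals : Fin n → ℝ :=
  (isHermitian_conjTranspose_mul_self A).eigenvalues

/-- A function of `Aᴴ * A` in its eigenbasis, taken of the eigenvalue's index rather than of the
eigenvalue, so that equal eigenvalues can be treated differently. -/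
def gramCalc (d : Fin n → ℝ) : Matrix (Fin n) (Fin n) ℝ :=
  gramVecs A * diagonal d * (gramVecs A)ᴴ

lemma gramVecs_conjTranspose_mul_self : (gramVecs A)ᴴ * gramVecs A = 1 :=
  Unitary.coe_star_mul_self (isHermitian_conjTranspose_mul_self A).eigenvectorUnitary

lemma gramVals_nonneg (i : Fin n) : 0 ≤ gramVals A i :=
  (posSemidef_conjTranspose_mul_self A).eigenvalues_nonneg i

lemma conjTranspose_mul_self_eq_gramCalc : Aᴴ * A = gramCalc A (gramVals A) := by
  simpa [gramCalc, gramVecs, gramVals, Matrix.star_eq_conjTranspose, RCLike.ofReal_real_eq_id]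
    using (isHermitian_conjTranspose_mul_self A).spectral_theorem

lemma gramCalc_mul (d e : Fin n → ℝ) : gramCalc A d * gramCalc A e = gramCalc A (d * e) := by
  rw [gramCalc, gramCalc, gramCalc, Matrix.mul_assoc, ← Matrix.mul_assoc (gramVecs A)ᴴ,
    ← Matrix.mul_assoc (gramVecs A)ᴴ, gramVecs_conjTranspose_mul_self, Matrix.one_mul,
    ← Matrix.mul_assoc, Matrix.mul_assoc _ (diagonal d), diagonal_mul_diagonal]
  rfl

lemma gramCalc_add (d e : Fin n → ℝ) : gramCalc A d + gramCalc A e = gramCalc A (d + e) := by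
  rw [gramCalc, gramCalc, gramCalc, ← Matrix.add_mul, ← Matrix.mul_add, diagonal_add]
  rfl

lemma gramCalc_one : gramCalc A 1 = 1 := by
  rw [gramCalc, Pi.one_def, diagonal_one, Matrix.mul_one]
  exact mul_eq_one_comm.mp (gramVecs_conjTranspose_mul_self A)

lemma conjTranspose_gramCalc (d : Fin n → ℝ) : (gramCalc A d)ᴴ = gramCalc A d := by
  rw [gramCalc, conjTranspose_mul, conjTranspose_mul, conjTranspose_conjTranspose,
    diagonal_conjTranspose, star_trivial, Matrix.mul_assoc]

lemma trace_gramCalc (d : Fin n → ℝ) : (gramCalc A d).trace = ∑ i, d i := by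
  rw [gramCalc, Matrix.trace_mul_cycle, gramVecs_conjTranspose_mul_self, Matrix.one_mul,
    trace_diagonal]

lemma rank_gramCalc_le (d : Fin n → ℝ) :
    (gramCalc A d).rank ≤ Fintype.card {i // d i ≠ 0} :=
  (rank_mul_le_left _ _).trans ((rank_mul_le_right _ _).trans (rank_diagonal d).le)

lemma nuclearNorm_eq_sum_sqrt_gramVals : nuclearNorm A = ∑ i, √(gramVals A i) :=
  trace_gramCalc A _

end Gram

section RowProj

variable (A : Matrix (Fin n) (Fin n) ℝ)

def rowProj : Matrix (Fin n) (Fin n) ℝ :=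
  gramCalc A fun i => if gramVals A i = 0 then 0 else 1

/-- The partial isometry `W` of the polar decomposition `A = W |A|`; the junk value
`(√0)⁻¹ = 0` makes it vanish on the kernel of `A`. -/
def polarFactor : Matrix (Fin n) (Fin n) ℝ :=
  A * gramCalc A fun i => (√(gramVals A i))⁻¹

lemma conjTranspose_rowProj : (rowProj A)ᴴ = rowProj A :=
  conjTranspose_gramCalc A _

lemma isStarProjection_rowProj : IsStarProjection (rowProj A) where
  isIdempotentElem := by
    rw [IsIdempotentElem, rowProj, gramCalc_mul]
    congr 1
    funext i
    simp only [Pi.mul_apply]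
    split_ifs <;> simp
  isSelfAdjoint := conjTranspose_rowProj A

lemma rowProj_eq_conjTranspose_mul :
    rowProj A = Aᴴ * (A * gramCalc A fun i => (gramVals A i)⁻¹) := by
  rw [← Matrix.mul_assoc, conjTranspose_mul_self_eq_gramCalc, gramCalc_mul, rowProj]
  congr 1
  funext i
  split_ifs with h <;> simp [h]

lemma conjTranspose_mul_self_mul_rowProj : Aᴴ * A * rowProj A = Aᴴ * A := by
  rw [conjTranspose_mul_self_eq_gramCalc, rowProj, gramCalc_mul]
  congr 1
  funext i
  simp only [Pi.mul_apply]
  split_ifs with h <;> simp [h]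

lemma mul_rowProj_eq_zero {M : Matrix (Fin n) (Fin n) ℝ} (h : M * Aᴴ = 0) :
    M * rowProj A = 0 := by
  rw [rowProj_eq_conjTranspose_mul, ← Matrix.mul_assoc, h, Matrix.zero_mul]

lemma rank_rowProj_le : (rowProj A).rank ≤ A.rank := by
  rw [rowProj_eq_conjTranspose_mul, ← rank_conjTranspose A]
  exact rank_mul_le_left _ _

lemma mul_rowProj_self : A * rowProj A = A := by
  have h : (A * (1 - rowProj A))ᴴ * (A * (1 - rowProj A)) = 0 := by
    rw [conjTranspose_mul, Matrix.mul_assoc, ← Matrix.mul_assoc Aᴴ, Matrix.mul_sub,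
      Matrix.mul_one, conjTranspose_mul_self_mul_rowProj, sub_self, Matrix.mul_zero]
  rwa [conjTranspose_mul_self_eq_zero, Matrix.mul_sub, Matrix.mul_one, sub_eq_zero, eq_comm] at h

lemma rowProj_mul_conjTranspose : rowProj A * Aᴴ = Aᴴ := by
  simpa only [conjTranspose_mul, conjTranspose_rowProj]
    using congrArg conjTranspose (mul_rowProj_self A)

lemma conjTranspose_polarFactor_mul_self : (polarFactor A)ᴴ * polarFactor A = rowProj A := by
  rw [polarFactor, conjTranspose_mul, conjTranspose_gramCalc, Matrix.mul_assoc,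
    ← Matrix.mul_assoc Aᴴ, conjTranspose_mul_self_eq_gramCalc, gramCalc_mul, gramCalc_mul,
    rowProj]
  congr 1
  funext i
  rw [Pi.mul_apply, Pi.mul_apply, ← mul_assoc, inv_mul_eq_div, Real.div_sqrt]
  split_ifs with h
  · simp [h]
  · exact mul_inv_cancel₀ (Real.sqrt_ne_zero'.mpr ((gramVals_nonneg A i).lt_of_ne' h))

lemma trace_conjTranspose_polarFactor_mul : ((polarFactor A)ᴴ * A).trace = nuclearNorm A := by
  rw [polarFactor, conjTranspose_mul, conjTranspose_gramCalc, Matrix.mul_assoc,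
    conjTranspose_mul_self_eq_gramCalc, gramCalc_mul, trace_gramCalc,
    nuclearNorm_eq_sum_sqrt_gramVals]
  congr 1
  funext i
  rw [Pi.mul_apply, inv_mul_eq_div, Real.div_sqrt]

end RowProj

lemma conjTranspose_polarFactor_mul_self_le_one (A : Matrix (Fin n) (Fin n) ℝ) :
    (polarFactor A)ᴴ * polarFactor A ≤ 1 := by
  rw [conjTranspose_polarFactor_mul_self]
  exact (isStarProjection_rowProj A).le_one

lemma trace_le_nuclearNorm {B : Matrix (Fin n) (Fin n) ℝ} (hB : Bᴴ * B ≤ 1)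
    (M : Matrix (Fin n) (Fin n) ℝ) : (Bᴴ * M).trace ≤ nuclearNorm M := by
  rw [nuclearNorm_eq_sum_sqrt_gramVals]
  exact trace_le_sum_sqrt_of_conjTranspose_mul_self_eq (gramVecs_conjTranspose_mul_self M) hB
    (conjTranspose_mul_self_eq_gramCalc M)

lemma nuclearNorm_le_of_conjTranspose_mul_self_eq {A M : Matrix (Fin n) (Fin n) ℝ}
    {μ : Fin n → ℝ} (hM : Mᴴ * M = gramCalc A μ) : nuclearNorm M ≤ ∑ i, √(μ i) := by
  rw [← trace_conjTranspose_polarFactor_mul]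
  exact trace_le_sum_sqrt_of_conjTranspose_mul_self_eq (gramVecs_conjTranspose_mul_self A)
    (conjTranspose_polarFactor_mul_self_le_one M) hM

lemma nuclearNorm_add_le (X Y : Matrix (Fin n) (Fin n) ℝ) :
    nuclearNorm (X + Y) ≤ nuclearNorm X + nuclearNorm Y := by
  rw [← trace_conjTranspose_polarFactor_mul, Matrix.mul_add, trace_add]
  have hW := conjTranspose_polarFactor_mul_self_le_one (X + Y)
  exact add_le_add (trace_le_nuclearNorm hW X) (trace_le_nuclearNorm hW Y)

lemma nuclearNorm_neg_le (Y : Matrix (Fin n) (Fin n) ℝ) : nuclearNorm (-Y) ≤ nuclearNorm Y := by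
  rw [nuclearNorm_eq_sum_sqrt_gramVals Y]
  refine nuclearNorm_le_of_conjTranspose_mul_self_eq (A := Y) ?_
  rw [conjTranspose_neg, neg_mul_neg, conjTranspose_mul_self_eq_gramCalc]

lemma nuclearNorm_sub_le_nuclearNorm_add (X Y : Matrix (Fin n) (Fin n) ℝ) :
    nuclearNorm X - nuclearNorm Y ≤ nuclearNorm (X + Y) := by
  have h := nuclearNorm_add_le (X + Y) (-Y)
  rw [add_neg_cancel_right] at h
  linarith [nuclearNorm_neg_le Y]

lemma nuclearNorm_add_of_orthogonal {X Y : Matrix (Fin n) (Fin n) ℝ} (h₁ : Xᴴ * Y = 0)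
    (h₂ : X * Yᴴ = 0) : nuclearNorm (X + Y) = nuclearNorm X + nuclearNorm Y := by
  refine le_antisymm (nuclearNorm_add_le X Y) ?_
  have h₁' : Yᴴ * X = 0 := by
    simpa only [conjTranspose_mul, conjTranspose_conjTranspose, conjTranspose_zero]
      using congrArg conjTranspose h₁
  have h₂' : Y * Xᴴ = 0 := by
    simpa only [conjTranspose_mul, conjTranspose_conjTranspose, conjTranspose_zero]
      using congrArg conjTranspose h₂
  have hXY : (polarFactor X)ᴴ * Y = 0 := by
    rw [polarFactor, conjTranspose_mul, Matrix.mul_assoc, h₁, Matrix.mul_zero]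
  have hYX : (polarFactor Y)ᴴ * X = 0 := by
    rw [polarFactor, conjTranspose_mul, Matrix.mul_assoc, h₁', Matrix.mul_zero]
  have hP : rowProj X * rowProj Y = 0 := by
    refine mul_rowProj_eq_zero Y ?_
    simpa only [conjTranspose_mul, conjTranspose_rowProj, conjTranspose_zero]
      using congrArg conjTranspose (mul_rowProj_eq_zero X h₂')
  set W := polarFactor X + polarFactor Y
  have hW : Wᴴ * W ≤ 1 := by
    have hWW : Wᴴ * W = rowProj X + rowProj Y := by
      have hXY' : (polarFactor X)ᴴ * polarFactor Y = 0 := by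
        rw [polarFactor.eq_1 Y, ← Matrix.mul_assoc, hXY, Matrix.zero_mul]
      have hYX' : (polarFactor Y)ᴴ * polarFactor X = 0 := by
        rw [polarFactor.eq_1 X, ← Matrix.mul_assoc, hYX, Matrix.zero_mul]
      rw [conjTranspose_add, Matrix.add_mul, Matrix.mul_add, Matrix.mul_add, hXY', hYX',
        conjTranspose_polarFactor_mul_self, conjTranspose_polarFactor_mul_self, add_zero,
        zero_add]
    rw [hWW]
    exact ((isStarProjection_rowProj X).add (isStarProjection_rowProj Y) hP).le_one
  calc nuclearNorm X + nuclearNorm Y = (Wᴴ * (X + Y)).trace := by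
        rw [conjTranspose_add, Matrix.add_mul, Matrix.mul_add, Matrix.mul_add, hXY, hYX,
          add_zero, zero_add, trace_add, trace_conjTranspose_polarFactor_mul,
          trace_conjTranspose_polarFactor_mul]
    _ ≤ nuclearNorm (X + Y) := trace_le_nuclearNorm hW _

/-- With `U`, `V` the projections onto the column and row spaces of `L`, take `P` the projection
onto the column spaces of `L` and of `C = (1 - U) Δ V`. -/
lemma exists_isStarProjection_rank_le (L Δ : Matrix (Fin n) (Fin n) ℝ) :
    ∃ P, IsStarProjection P ∧ P.rank ≤ 2 * L.rank ∧ Lᴴ * (1 - P) = 0 ∧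
      (1 - P) * Δ * Lᴴ = 0 := by
  set U := rowProj Lᴴ
  set C := (1 - U) * Δ * rowProj L
  set Q := rowProj Cᴴ
  have hU : IsStarProjection U := isStarProjection_rowProj Lᴴ
  have hQ : IsStarProjection Q := isStarProjection_rowProj Cᴴ
  have hUC : U * C = 0 := by
    rw [← Matrix.mul_assoc, ← Matrix.mul_assoc, hU.mul_one_sub_self, Matrix.zero_mul,
      Matrix.zero_mul]
  have hUQ : U * Q = 0 := mul_rowProj_eq_zero _ (by rwa [conjTranspose_conjTranspose])
  have hQU : Q * U = 0 := by
    simpa only [star_mul, hU.isSelfAdjoint.star_eq, hQ.isSelfAdjoint.star_eq, star_zero]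
      using congrArg star hUQ
  have hQC : Q * C = C := by
    simpa only [conjTranspose_conjTranspose] using rowProj_mul_conjTranspose Cᴴ
  have hLU : Lᴴ * (1 - U) = 0 := by
    rw [Matrix.mul_sub, Matrix.mul_one, mul_rowProj_self, sub_self]
  have hLQ : Lᴴ * Q = 0 := by
    refine mul_rowProj_eq_zero _ ?_
    rw [conjTranspose_conjTranspose, ← Matrix.mul_assoc, ← Matrix.mul_assoc, hLU,
      Matrix.zero_mul, Matrix.zero_mul]
  refine ⟨U + Q, hU.add hQ hUQ, ?_, ?_, ?_⟩
  · have hUrank : U.rank ≤ L.rank := (rank_rowProj_le Lᴴ).trans (rank_conjTranspose L).le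
    have hQrank : Q.rank ≤ L.rank :=
      calc Q.rank ≤ C.rank := (rank_rowProj_le Cᴴ).trans (rank_conjTranspose C).le
        _ ≤ (rowProj L).rank := rank_mul_le_right _ _
        _ ≤ L.rank := rank_rowProj_le L
    linarith [rank_add_le U Q]
  · rw [sub_add_eq_sub_sub, Matrix.mul_sub, hLU, hLQ, sub_zero]
  · have h1 : (1 - (U + Q)) * U = 0 := by
      rw [Matrix.sub_mul, Matrix.add_mul, hU.isIdempotentElem.eq, hQU]
      simp
    have h2 : (1 - (U + Q)) * C = 0 := by
      rw [Matrix.sub_mul, Matrix.add_mul, hUC, hQC]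
      simp
    calc (1 - (U + Q)) * Δ * Lᴴ = (1 - (U + Q)) * Δ * rowProj L * Lᴴ := by
          rw [Matrix.mul_assoc _ (rowProj L), rowProj_mul_conjTranspose]
      _ = ((1 - (U + Q)) * U * Δ * rowProj L + (1 - (U + Q)) * C) * Lᴴ := by
          simp only [C]
          noncomm_ring
      _ = 0 := by rw [h1, h2]; simp

lemma exists_split_le_nuclearNorm_add (Lk Lr Δ : Matrix (Fin n) (Fin n) ℝ) :
    ∃ ΔA ΔB : Matrix (Fin n) (Fin n) ℝ, Δ = ΔA + ΔB ∧ ΔA.rank ≤ 2 * Lk.rank ∧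
      ΔAᴴ * ΔB = 0 ∧ ΔBᴴ * ΔA = 0 ∧
      nuclearNorm (Lk + Lr) + nuclearNorm ΔB - nuclearNorm ΔA - 2 * nuclearNorm Lr ≤
        nuclearNorm (Lk + Lr + Δ) := by
  obtain ⟨P, hP, hrank, hLP, hPΔ⟩ := exists_isStarProjection_rank_le Lk Δ
  have hAB : (P * Δ)ᴴ * ((1 - P) * Δ) = 0 := by
    rw [conjTranspose_mul, ← star_eq_conjTranspose P, hP.isSelfAdjoint.star_eq, Matrix.mul_assoc,
      ← Matrix.mul_assoc P, hP.mul_one_sub_self, Matrix.zero_mul, Matrix.mul_zero]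
  refine ⟨P * Δ, (1 - P) * Δ, by rw [← Matrix.add_mul, add_sub_cancel, Matrix.one_mul],
    (rank_mul_le_left _ _).trans hrank, hAB, ?_, ?_⟩
  · simpa only [conjTranspose_mul, conjTranspose_conjTranspose, conjTranspose_zero,
      Matrix.mul_assoc] using congrArg conjTranspose hAB
  have horth : nuclearNorm (Lk + (1 - P) * Δ) = nuclearNorm Lk + nuclearNorm ((1 - P) * Δ) := by
    refine nuclearNorm_add_of_orthogonal (by rw [← Matrix.mul_assoc, hLP, Matrix.zero_mul]) ?_
    simpa only [conjTranspose_mul, conjTranspose_conjTranspose, conjTranspose_zero,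
      Matrix.mul_assoc] using congrArg conjTranspose hPΔ
  have hsplit : Lk + (1 - P) * Δ + (Lr + P * Δ) = Lk + Lr + Δ := by noncomm_ring
  have htri := nuclearNorm_sub_le_nuclearNorm_add (Lk + (1 - P) * Δ) (Lr + P * Δ)
  rw [hsplit, horth] at htri
  linarith [nuclearNorm_add_le Lr (P * Δ), nuclearNorm_add_le Lk Lr]

lemma svDesc_eq_sqrt_gramVals (A : Matrix (Fin n) (Fin n) ℝ) (j : Fin n) :
    svDesc A j = √(gramVals A ((Fin.revPerm.trans (Tuple.sort (gramVals A))) j)) :=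
  rfl

lemma nuclearNorm_mul_gramCalc_indicator_le (A : Matrix (Fin n) (Fin n) ℝ) (S : Finset (Fin n)) :
    nuclearNorm (A * gramCalc A fun i => if i ∈ S then 1 else 0) ≤
      ∑ i ∈ S, √(gramVals A i) := by
  have h : (A * gramCalc A fun i => if i ∈ S then 1 else 0)ᴴ *
      (A * gramCalc A fun i => if i ∈ S then 1 else 0) =
      gramCalc A fun i => if i ∈ S then gramVals A i else 0 := by
    rw [conjTranspose_mul, conjTranspose_gramCalc, Matrix.mul_assoc, ← Matrix.mul_assoc Aᴴ,
      conjTranspose_mul_self_eq_gramCalc, gramCalc_mul, gramCalc_mul]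
    congr 1
    funext i
    simp only [Pi.mul_apply]
    split_ifs <;> simp
  refine (nuclearNorm_le_of_conjTranspose_mul_self_eq h).trans_eq ?_
  simp only [apply_ite Real.sqrt, Real.sqrt_zero, Finset.sum_ite_mem, Finset.univ_inter]

lemma exists_rank_le_nuclearNorm_sub_le (A : Matrix (Fin n) (Fin n) ℝ) (k : ℕ) :
    ∃ L : Matrix (Fin n) (Fin n) ℝ, L.rank ≤ k ∧
      nuclearNorm (A - L) ≤
        ∑ j ∈ Finset.univ.filter (fun j : Fin n => k ≤ (j : ℕ)), svDesc A j := by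
  -- `gramVals A (σ j)` is the `(j + 1)`-st largest eigenvalue; `H` indexes the `k` largest.
  set σ := Fin.revPerm.trans (Tuple.sort (gramVals A))
  set H := Finset.univ.filter fun i => (σ.symm i : ℕ) < k
  set T := Finset.univ.filter fun i => k ≤ (σ.symm i : ℕ)
  refine ⟨A * gramCalc A fun i => if i ∈ H then 1 else 0, ?_, ?_⟩
  · refine (rank_mul_le_right _ _).trans ((rank_gramCalc_le _ _).trans ?_)
    have hH : #H = #(Finset.univ.filter fun j : Fin n => (j : ℕ) < k) :=
      Finset.card_equiv σ.symm (by simp [H])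
    simp [Fintype.card_subtype, hH, Fin.card_filter_val_lt]
  · have hsplit : A - (A * gramCalc A fun i => if i ∈ H then 1 else 0) =
        A * gramCalc A fun i => if i ∈ T then 1 else 0 := by
      rw [sub_eq_iff_eq_add, ← Matrix.mul_add, gramCalc_add]
      convert (Matrix.mul_one A).symm using 2
      rw [← gramCalc_one A]
      congr 1
      funext i
      simp only [Pi.add_apply, Pi.one_apply, H, T, Finset.mem_filter, Finset.mem_univ, true_and]
      split_ifs <;> norm_num <;> omega
    rw [hsplit]
    refine (nuclearNorm_mul_gramCalc_indicator_le A T).trans_eq ?_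
    exact Finset.sum_equiv σ.symm (by simp [T]) (by simp [svDesc_eq_sqrt_gramVals, σ])

theorem stmt3_general (n : ℕ) (Ls Δ : Matrix (Fin n) (Fin n) ℝ) (k : ℕ) :
    ∃ ΔA ΔB : Matrix (Fin n) (Fin n) ℝ,
      Δ = ΔA + ΔB ∧
      ΔA.rank ≤ 2 * k ∧ ΔAᵀ * ΔB = 0 ∧ ΔBᵀ * ΔA = 0 ∧
      nuclearNorm (Ls + Δ) ≥
        nuclearNorm Ls + nuclearNorm ΔB - nuclearNorm ΔA
          - 2 * ∑ j ∈ Finset.univ.filter (fun j : Fin n => k ≤ (j : ℕ)), svDesc Ls j := by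
  obtain ⟨Lk, hrank, htail⟩ := exists_rank_le_nuclearNorm_sub_le Ls k
  obtain ⟨ΔA, ΔB, hΔ, hA, hAB, hBA, hnorm⟩ := exists_split_le_nuclearNorm_add Lk (Ls - Lk) Δ
  rw [add_sub_cancel] at hnorm
  refine ⟨ΔA, ΔB, hΔ, hA.trans (by omega), ?_, ?_, by linarith⟩
  · rwa [← conjTranspose_eq_transpose_of_trivial]
  · rwa [← conjTranspose_eq_transpose_of_trivial]

/-- decomposition of `Δ` adapted to `L*` with rank ≤ 2k part and orthogonal part,
together with the nuclear-norm decomposability bound. -/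
theorem stmt3 (n : ℕ) (Ls Δ : Matrix (Fin n) (Fin n) ℝ) (k : ℕ) (hk1 : 1 ≤ k) (hkn : k ≤ n) :
    ∃ ΔA ΔB : Matrix (Fin n) (Fin n) ℝ,
      Δ = ΔA + ΔB ∧
      ΔA.rank ≤ 2 * k ∧ ΔAᵀ * ΔB = 0 ∧ ΔBᵀ * ΔA = 0 ∧
      nuclearNorm (Ls + Δ) ≥
        nuclearNorm Ls + nuclearNorm ΔB - nuclearNorm ΔA
          - 2 * ∑ j ∈ Finset.univ.filter (fun j : Fin n => k ≤ (j : ℕ)), svDesc Ls j :=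
  stmt3_general n Ls Δ k

end CitNet
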